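/- arXiv:0906.2169 — 4 statements merged into one kernel-verified Lean document; each statement's English description precedes it below -/
import Mathlib

section
/- (Direct reduction of the second flow.) Let c_0 ∈ ℝ, let I ⊆ ℝ be an open interval, and let σ : I → ℝ be twice differentiable with σ'(t) > 0 and σ''(t) = -2 c_0 σ'(t)^2 for all t ∈ I. Let ν : ℤ → ℝ be arbitrary and set η(n,t) = ν(n) + σ(t). Let H, G : ℝ → ℝ be differentiable and suppose that for all n ∈ ℤ and t ∈ I, writing η = η(n,t), η̄ = η(n+1,t), η̲ = η(n-1,t): -c_0 H(η) + H'(η) = H(η)(H(η̄)^2 - H(η̲)^2 + G(η̄)^2 - G(η)^2) and -c_0 G(η) + G'(η) = 2(H(η)^2 (G(η̄) + G(η)) - H(η̲)^2 (G(η) + G(η̲))). Then the functions u(n,t) := √(σ'(t)) · H(η(n,t)) and v(n,t) := √(σ'(t)) · G(η(n,t)) are differentiable in t and satisfy the second flow of the Toda hierarchy for all n ∈ ℤ and t ∈ I. -/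
/-!
The ansatz separates variables: for `w(n,t) = √(σ'(t)) F(ν n + σ t)` the chain rule gives
`∂ₜw = σ''/(2√σ') F + √σ' σ' F'`, and the equation `σ'' = -2c₀σ'²` turns this into
`σ'^{3/2} (-c₀ F + F')`. Every cubic term of the second flow carries the same factor
`σ'^{3/2}`, so the flow reduces to the delay-differential system for `H` and `G`.
-/

open Real

theorem hasDerivAt_sqrt_of_sq_ode {σ' : ℝ → ℝ} {σ'' c₀ t : ℝ} (hσ' : HasDerivAt σ' σ'' t)
    (hpos : 0 < σ' t) (hode : σ'' = -2 * c₀ * σ' t ^ 2) :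
    HasDerivAt (fun s => √(σ' s)) (-c₀ * √(σ' t) ^ 3) t := by
  refine (hσ'.sqrt hpos.ne').congr_deriv ?_
  have hr : 0 < √(σ' t) := sqrt_pos.mpr hpos
  rw [hode, div_eq_iff (by positivity)]
  linear_combination 2 * c₀ * (√(σ' t) ^ 2 + σ' t) * sq_sqrt hpos.le

theorem hasDerivAt_sqrt_mul_comp_add {σ σ' F : ℝ → ℝ} {σ'' c₀ ν t F' : ℝ}
    (hσ : HasDerivAt σ (σ' t) t) (hσ' : HasDerivAt σ' σ'' t) (hpos : 0 < σ' t)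
    (hode : σ'' = -2 * c₀ * σ' t ^ 2) (hF : HasDerivAt F F' (ν + σ t)) :
    HasDerivAt (fun s => √(σ' s) * F (ν + σ s))
      (√(σ' t) ^ 3 * (-c₀ * F (ν + σ t) + F')) t := by
  refine ((hasDerivAt_sqrt_of_sq_ode hσ' hpos hode).mul
    (hF.comp t (hσ.const_add ν))).congr_deriv ?_
  rw [Function.comp_apply]
  linear_combination -√(σ' t) * F' * sq_sqrt hpos.le

/-- Direct reduction of the second flow of the Toda hierarchy:
if `σ` solves `σ'' = -2c₀(σ')²` with `σ' > 0` on an open interval, `η(n,t) = ν(n) + σ(t)`,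
and `H, G` solve the reduced second-flow delay-differential system, then
`u(n,t) = √(σ'(t)) H(η(n,t))`, `v(n,t) = √(σ'(t)) G(η(n,t))` solve the second flow
of the Toda hierarchy. -/
theorem direct_reduction_second_flow
    (c₀ a b : ℝ) (σ σ' σ'' : ℝ → ℝ)
    (hσ : ∀ t ∈ Set.Ioo a b, HasDerivAt σ (σ' t) t)
    (hσ' : ∀ t ∈ Set.Ioo a b, HasDerivAt σ' (σ'' t) t)
    (hσpos : ∀ t ∈ Set.Ioo a b, 0 < σ' t)
    (hode : ∀ t ∈ Set.Ioo a b, σ'' t = -2 * c₀ * (σ' t)^2)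
    (ν : ℤ → ℝ) (η : ℤ → ℝ → ℝ) (hη : ∀ (n : ℤ) (t : ℝ), η n t = ν n + σ t)
    (H G H' G' : ℝ → ℝ)
    (hH : ∀ x : ℝ, HasDerivAt H (H' x) x)
    (hG : ∀ x : ℝ, HasDerivAt G (G' x) x)
    (hred₁ : ∀ (n : ℤ), ∀ t ∈ Set.Ioo a b,
      -c₀ * H (η n t) + H' (η n t) =
        H (η n t) * ((H (η (n+1) t))^2 - (H (η (n-1) t))^2
          + (G (η (n+1) t))^2 - (G (η n t))^2))
    (hred₂ : ∀ (n : ℤ), ∀ t ∈ Set.Ioo a b,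
      -c₀ * G (η n t) + G' (η n t) =
        2 * ((H (η n t))^2 * (G (η (n+1) t) + G (η n t))
          - (H (η (n-1) t))^2 * (G (η n t) + G (η (n-1) t))))
    (u v : ℤ → ℝ → ℝ)
    (hu : ∀ (n : ℤ) (t : ℝ), u n t = Real.sqrt (σ' t) * H (η n t))
    (hv : ∀ (n : ℤ) (t : ℝ), v n t = Real.sqrt (σ' t) * G (η n t)) :
    ∀ (n : ℤ), ∀ t ∈ Set.Ioo a b,
      HasDerivAt (fun s => u n s)
        (u n t * ((u (n+1) t)^2 - (u (n-1) t)^2 + (v (n+1) t)^2 - (v n t)^2)) t ∧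
      HasDerivAt (fun s => v n s)
        (2 * ((u n t)^2 * (v (n+1) t + v n t)
          - (u (n-1) t)^2 * (v n t + v (n-1) t))) t := by
  intro n t ht
  have hu_deriv := hasDerivAt_sqrt_mul_comp_add (hσ t ht) (hσ' t ht) (hσpos t ht) (hode t ht)
    (ν := ν n) (hH _)
  have hv_deriv := hasDerivAt_sqrt_mul_comp_add (hσ t ht) (hσ' t ht) (hσpos t ht) (hode t ht)
    (ν := ν n) (hG _)
  have h₁ := hred₁ n t ht
  have h₂ := hred₂ n t ht
  simp only [hη] at h₁ h₂
  simp only [hu, hv, hη]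
  constructor
  · convert hu_deriv using 1
    rw [h₁]
    ring
  · convert hv_deriv using 1
    rw [h₂]
    ring
end

section
/- (Direct reduction of the third flow.) Let c_0 ∈ ℝ, let I ⊆ ℝ be an open interval, and let σ : I → ℝ be twice differentiable with σ'(t) > 0 and σ''(t) = -3 c_0 σ'(t)^2 for all t ∈ I. Let ν : ℤ → ℝ be arbitrary and set η(n,t) = ν(n) + σ(t). Let H, G : ℝ → ℝ be differentiable and suppose that for all n ∈ ℤ and t ∈ I, writing η = η(n,t), η̄ = η(n+1,t), η̿ = η(n+2,t), η̲ = η(n-1,t), η̲̲ = η(n-2,t): -c_0 H(η) + H'(η) = H(η)(H(η̄)^2 (G(η̿) + 2 G(η̄)) + H(η)^2 (G(η̄) - G(η)) - H(η̲)^2 (2 G(η) + G(η̲)) + G(η̄)^3 - G(η)^3) and -c_0 G(η) + G'(η) = 2(H(η)^2 (H(η̄)^2 + H(η)^2 + G(η̄)^2 + G(η̄) G(η) + G(η)^2) - H(η̲)^2 (H(η̲)^2 + H(η̲̲)^2 + G(η)^2 + G(η) G(η̲) + G(η̲)^2)). Then u(n,t) := σ'(t)^{1/3} · H(η(n,t))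 and v(n,t) := σ'(t)^{1/3} · G(η(n,t)) are differentiable in t and satisfy the third flow of the Toda hierarchy for all n ∈ ℤ and t ∈ I. -/
/-- Direct reduction of the third flow of the Toda hierarchy:
if `σ` solves `σ'' = -3c₀(σ')²` with `σ' > 0` on an open interval, `η(n,t) = ν(n) + σ(t)`,
and `H, G` solve the reduced third-flow delay-differential system, then
`u(n,t) = σ'(t)^(1/3) H(η(n,t))`, `v(n,t) = σ'(t)^(1/3) G(η(n,t))` solve the third flow
of the Toda hierarchy. -/
theorem direct_reduction_third_flow
    (c₀ a b : ℝ) (σ σ' σ'' : ℝ → ℝ)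
    (hσ : ∀ t ∈ Set.Ioo a b, HasDerivAt σ (σ' t) t)
    (hσ' : ∀ t ∈ Set.Ioo a b, HasDerivAt σ' (σ'' t) t)
    (hσpos : ∀ t ∈ Set.Ioo a b, 0 < σ' t)
    (hode : ∀ t ∈ Set.Ioo a b, σ'' t = -3 * c₀ * (σ' t)^2)
    (ν : ℤ → ℝ) (η : ℤ → ℝ → ℝ) (hη : ∀ (n : ℤ) (t : ℝ), η n t = ν n + σ t)
    (H G H' G' : ℝ → ℝ)
    (hH : ∀ x : ℝ, HasDerivAt H (H' x) x)
    (hG : ∀ x : ℝ, HasDerivAt G (G' x) x)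
    (hred₁ : ∀ (n : ℤ), ∀ t ∈ Set.Ioo a b,
      -c₀ * H (η n t) + H' (η n t) =
        H (η n t) * ((H (η (n+1) t))^2 * (G (η (n+2) t) + 2 * G (η (n+1) t))
          + (H (η n t))^2 * (G (η (n+1) t) - G (η n t))
          - (H (η (n-1) t))^2 * (2 * G (η n t) + G (η (n-1) t))
          + (G (η (n+1) t))^3 - (G (η n t))^3))
    (hred₂ : ∀ (n : ℤ), ∀ t ∈ Set.Ioo a b,
      -c₀ * G (η n t) + G' (η n t) =
        2 * ((H (η n t))^2 * ((H (η (n+1) t))^2 + (H (η n t))^2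
              + (G (η (n+1) t))^2 + G (η (n+1) t) * G (η n t) + (G (η n t))^2)
          - (H (η (n-1) t))^2 * ((H (η (n-1) t))^2 + (H (η (n-2) t))^2
              + (G (η n t))^2 + G (η n t) * G (η (n-1) t) + (G (η (n-1) t))^2)))
    (u v : ℤ → ℝ → ℝ)
    (hu : ∀ (n : ℤ) (t : ℝ), u n t = (σ' t) ^ ((1 : ℝ)/3) * H (η n t))
    (hv : ∀ (n : ℤ) (t : ℝ), v n t = (σ' t) ^ ((1 : ℝ)/3) * G (η n t)) :
    ∀ (n : ℤ), ∀ t ∈ Set.Ioo a b,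
      HasDerivAt (fun s => u n s)
        (u n t * ((u (n+1) t)^2 * (v (n+2) t + 2 * v (n+1) t)
          + (u n t)^2 * (v (n+1) t - v n t)
          - (u (n-1) t)^2 * (2 * v n t + v (n-1) t)
          + (v (n+1) t)^3 - (v n t)^3)) t ∧
      HasDerivAt (fun s => v n s)
        (2 * ((u n t)^2 * ((u (n+1) t)^2 + (u n t)^2 + (v (n+1) t)^2
              + v (n+1) t * v n t + (v n t)^2)
          - (u (n-1) t)^2 * ((u (n-1) t)^2 + (u (n-2) t)^2 + (v n t)^2
              + v n t * v (n-1) t + (v (n-1) t)^2))) t := by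
  intro n t ht
  have hpos := hσpos t ht
  have h43 : (σ' t) ^ ((4:ℝ)/3) = ((σ' t) ^ ((1:ℝ)/3))^(4:ℕ) := by
    rw [← Real.rpow_natCast ((σ' t) ^ ((1:ℝ)/3)) 4, ← Real.rpow_mul hpos.le]
    norm_num
  have h13p1 : (σ' t) ^ ((1:ℝ)/3) * σ' t = (σ' t) ^ ((4:ℝ)/3) := by
    have h := (Real.rpow_add hpos ((1:ℝ)/3) 1).symm
    rw [Real.rpow_one] at h
    rw [h]; norm_num
  have hder1 : σ'' t * ((1:ℝ)/3) * (σ' t) ^ ((1:ℝ)/3 - 1) = -c₀ * (σ' t) ^ ((4:ℝ)/3) := by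
    have e1 : (σ' t) ^ ((2:ℕ):ℝ) * (σ' t) ^ ((1:ℝ)/3 - 1) = (σ' t) ^ ((4:ℝ)/3) := by
      rw [← Real.rpow_add hpos]; norm_num
    calc σ'' t * ((1:ℝ)/3) * (σ' t) ^ ((1:ℝ)/3 - 1)
        = -c₀ * ((σ' t) ^ ((2:ℕ):ℝ) * (σ' t) ^ ((1:ℝ)/3 - 1)) := by
          rw [hode t ht, Real.rpow_natCast]; ring
      _ = -c₀ * (σ' t) ^ ((4:ℝ)/3) := by rw [e1]
  have hdP : HasDerivAt (fun s => (σ' s) ^ ((1:ℝ)/3)) (-c₀ * (σ' t) ^ ((4:ℝ)/3)) t := by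
    have h := (hσ' t ht).rpow_const (p := (1:ℝ)/3) (Or.inl hpos.ne')
    rwa [hder1] at h
  have hgd : ∀ m : ℤ, HasDerivAt (fun s => ν m + σ s) (σ' t) t :=
    fun m => (hσ t ht).const_add (ν m)
  have hdH : HasDerivAt (fun s => H (ν n + σ s)) (H' (ν n + σ t) * σ' t) t :=
    (hH (ν n + σ t)).comp t (hgd n)
  have hdG : HasDerivAt (fun s => G (ν n + σ s)) (G' (ν n + σ t) * σ' t) t :=
    (hG (ν n + σ t)).comp t (hgd n)
  have hdu : HasDerivAt (fun s => (σ' s) ^ ((1:ℝ)/3) * H (ν n + σ s))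
      (-c₀ * (σ' t) ^ ((4:ℝ)/3) * H (ν n + σ t)
        + (σ' t) ^ ((1:ℝ)/3) * (H' (ν n + σ t) * σ' t)) t := hdP.mul hdH
  have hdv : HasDerivAt (fun s => (σ' s) ^ ((1:ℝ)/3) * G (ν n + σ s))
      (-c₀ * (σ' t) ^ ((4:ℝ)/3) * G (ν n + σ t)
        + (σ' t) ^ ((1:ℝ)/3) * (G' (ν n + σ t) * σ' t)) t := hdP.mul hdG
  have hηt : ν n + σ t = η n t := (hη n t).symm
  rw [hηt] at hdu hdv
  have hfu : (fun s => u n s) = fun s => (σ' s) ^ ((1:ℝ)/3) * H (ν n + σ s) := by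
    funext s; rw [hu, hη]
  have hfv : (fun s => v n s) = fun s => (σ' s) ^ ((1:ℝ)/3) * G (ν n + σ s) := by
    funext s; rw [hv, hη]
  have hr1 := hred₁ n t ht
  have hr2 := hred₂ n t ht
  have hmix : ∀ F : ℝ → ℝ, (σ' t) ^ ((1:ℝ)/3) * (F (η n t) * σ' t)
      = ((σ' t) ^ ((1:ℝ)/3))^(4:ℕ) * F (η n t) := by
    intro F
    rw [← h43, ← h13p1]; ring
  constructor
  · have hval : u n t * ((u (n+1) t)^2 * (v (n+2) t + 2 * v (n+1) t)
          + (u n t)^2 * (v (n+1) t - v n t)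
          - (u (n-1) t)^2 * (2 * v n t + v (n-1) t)
          + (v (n+1) t)^3 - (v n t)^3)
        = -c₀ * (σ' t) ^ ((4:ℝ)/3) * H (η n t)
          + (σ' t) ^ ((1:ℝ)/3) * (H' (η n t) * σ' t) := by
      rw [hmix H', h43]
      simp only [hu, hv]
      linear_combination (-((σ' t) ^ ((1:ℝ)/3))^(4:ℕ)) * hr1
    rw [hfu, hval]; exact hdu
  · have hval : 2 * ((u n t)^2 * ((u (n+1) t)^2 + (u n t)^2 + (v (n+1) t)^2
              + v (n+1) t * v n t + (v n t)^2)
          - (u (n-1) t)^2 * ((u (n-1) t)^2 + (u (n-2) t)^2 + (v n t)^2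
              + v n t * v (n-1) t + (v (n-1) t)^2))
        = -c₀ * (σ' t) ^ ((4:ℝ)/3) * G (η n t)
          + (σ' t) ^ ((1:ℝ)/3) * (G' (η n t) * σ' t) := by
      rw [hmix G', h43]
      simp only [hu, hv]
      linear_combination (-((σ' t) ^ ((1:ℝ)/3))^(4:ℕ)) * hr2
    rw [hfv, hval]; exact hdv
end

section
/- (Reduction of the Lax pair of the second flow.) Let c_0 ∈ ℝ, I ⊆ ℝ an open interval, σ : I → ℝ twice differentiable with σ'(t) > 0 and σ''(t) = -2 c_0 σ'(t)^2 on I, ν : ℤ → ℝ arbitrary, η(n,t) = ν(n) + σ(t), and H, G : ℝ → ℝ. Fix λ ∈ ℝ and set ζ(t) = λ / √(σ'(t)), u(n,t) = √(σ'(t)) H(η(n,t)), v(n,t) = √(σ'(t)) G(η(n,t)). Let φ : ℝ × ℝ → ℝ be differentiable in both arguments and suppose that for all n ∈ ℤ and t ∈ I, writing η = η(n,t), η̄ = η(n+1,t), η̲ = η(n-1,t), z = ζ(t): z φ(η,z) = H(η) φ(η̄,z) + H(η̲) φ(η̲,z) + G(η) φ(η,z), and c_0 z ∂_ζ φ(η,z)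 + ∂_η φ(η,z) = 2 H(η)(z + G(η)) φ(η̄,z) - (z^2 + H(η)^2 - H(η̲)^2 - G(η)^2) φ(η,z). Then ψ(n,t) := φ(η(n,t), ζ(t)) satisfies the Lax pair of the second flow: λ ψ(n,t) = u(n,t) ψ(n+1,t) + u(n-1,t) ψ(n-1,t) + v(n,t) ψ(n,t), and ∂_t ψ(n,t) = 2 u(n,t)(λ + v(n,t)) ψ(n+1,t) - (λ^2 + u(n,t)^2 - u(n-1,t)^2 - v(n,t)^2) ψ(n,t), for all n ∈ ℤ, t ∈ I. -/
/-!
Along the reduction, `ψ(n,t) = φ(η(n,t), ζ(t))` with `λ = √σ' · ζ`, so the spatial equation is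
the reduced one multiplied by `√σ'`. For the time equation, the Riccati equation
`σ'' = -2 c₀ σ'²` makes `ζ = λ/√σ'` evolve by `ζ' = c₀ ζ σ'`, hence by the chain rule
`∂_t ψ = σ' (c₀ ζ ∂_ζ φ + ∂_η φ)`; the second reduced equation, multiplied by `σ' = (√σ')²`,
is then the second-flow equation for `u = √σ' H`, `v = √σ' G`.
-/

open ContinuousLinearMap in
theorem HasFDerivAt.comp_hasDerivAt_prodMk {φ : ℝ × ℝ → ℝ} {x y : ℝ → ℝ} {a b x' y' t : ℝ}
    (hφ : HasFDerivAt φ (a • fst ℝ ℝ ℝ + b • snd ℝ ℝ ℝ) (x t, y t))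
    (hx : HasDerivAt x x' t) (hy : HasDerivAt y y' t) :
    HasDerivAt (fun s => φ (x s, y s)) (a * x' + b * y') t := by
  refine (hφ.comp_hasDerivAt t (hx.prodMk hy)).congr_deriv ?_
  simp

theorem HasDerivAt.const_div_sqrt {f : ℝ → ℝ} {f' t : ℝ} (c : ℝ) (hf : HasDerivAt f f' t)
    (hpos : 0 < f t) :
    HasDerivAt (fun s => c / √(f s)) (-(c / √(f t)) * f' / (2 * f t)) t := by
  have hr : 0 < √(f t) := Real.sqrt_pos.mpr hpos
  have hsqrt := hf.sqrt hpos.ne'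
  refine ((hasDerivAt_const t c).div hsqrt hr.ne').congr_deriv ?_
  field_simp
  rw [Real.sq_sqrt hpos.le]
  ring

/-- Reduction of the Lax pair of the second flow: if `φ(η, ζ)` solves the
reduced second-flow Lax pair along the reduction `η(n,t) = ν(n) + σ(t)`,
`ζ(t) = λ/√(σ'(t))`, then `ψ(n,t) = φ(η(n,t), ζ(t))` solves the Lax pair of the second
flow of the Toda hierarchy with `u = √(σ') H(η)`, `v = √(σ') G(η)`. -/
theorem lax_reduction_second_flow
    (c₀ a b lam : ℝ) (σ σ' σ'' : ℝ → ℝ)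
    (hσ : ∀ t ∈ Set.Ioo a b, HasDerivAt σ (σ' t) t)
    (hσ' : ∀ t ∈ Set.Ioo a b, HasDerivAt σ' (σ'' t) t)
    (hσpos : ∀ t ∈ Set.Ioo a b, 0 < σ' t)
    (hode : ∀ t ∈ Set.Ioo a b, σ'' t = -2 * c₀ * (σ' t)^2)
    (ν : ℤ → ℝ) (η : ℤ → ℝ → ℝ) (hη : ∀ (n : ℤ) (t : ℝ), η n t = ν n + σ t)
    (H G : ℝ → ℝ)
    (ζ : ℝ → ℝ) (hζ : ∀ t : ℝ, ζ t = lam / Real.sqrt (σ' t))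
    (u v : ℤ → ℝ → ℝ)
    (hu : ∀ (n : ℤ) (t : ℝ), u n t = Real.sqrt (σ' t) * H (η n t))
    (hv : ∀ (n : ℤ) (t : ℝ), v n t = Real.sqrt (σ' t) * G (η n t))
    (φ φη φζ : ℝ × ℝ → ℝ)
    (hφ : ∀ p : ℝ × ℝ, HasFDerivAt φ
      (φη p • ContinuousLinearMap.fst ℝ ℝ ℝ + φζ p • ContinuousLinearMap.snd ℝ ℝ ℝ) p)
    (hlax₁ : ∀ (n : ℤ), ∀ t ∈ Set.Ioo a b,
      ζ t * φ (η n t, ζ t) =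
        H (η n t) * φ (η (n+1) t, ζ t) + H (η (n-1) t) * φ (η (n-1) t, ζ t)
          + G (η n t) * φ (η n t, ζ t))
    (hlax₂ : ∀ (n : ℤ), ∀ t ∈ Set.Ioo a b,
      c₀ * ζ t * φζ (η n t, ζ t) + φη (η n t, ζ t) =
        2 * H (η n t) * (ζ t + G (η n t)) * φ (η (n+1) t, ζ t)
          - ((ζ t)^2 + (H (η n t))^2 - (H (η (n-1) t))^2 - (G (η n t))^2)
              * φ (η n t, ζ t))
    (ψ : ℤ → ℝ → ℝ) (hψ : ∀ (n : ℤ) (t : ℝ), ψ n t = φ (η n t, ζ t)) :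
    ∀ (n : ℤ), ∀ t ∈ Set.Ioo a b,
      lam * ψ n t = u n t * ψ (n+1) t + u (n-1) t * ψ (n-1) t + v n t * ψ n t ∧
      HasDerivAt (fun s => ψ n s)
        (2 * u n t * (lam + v n t) * ψ (n+1) t
          - (lam^2 + (u n t)^2 - (u (n-1) t)^2 - (v n t)^2) * ψ n t) t := by
  intro n t ht
  have hpos := hσpos t ht
  have hsq : √(σ' t) ^ 2 = σ' t := Real.sq_sqrt hpos.le
  have hlam : lam = √(σ' t) * ζ t := by
    rw [hζ]; field_simp [(Real.sqrt_pos.mpr hpos).ne']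
  have hηd : HasDerivAt (η n) (σ' t) t := by
    simpa only [funext (hη n)] using (hσ t ht).const_add (ν n)
  have hζd : HasDerivAt ζ (c₀ * ζ t * σ' t) t := by
    rw [funext hζ]
    refine ((hσ' t ht).const_div_sqrt lam hpos).congr_deriv ?_
    rw [hode t ht, ← hζ, hlam]
    field_simp
  refine ⟨?_, ?_⟩
  · simp only [hψ, hu, hv, hlam]
    linear_combination √(σ' t) * hlax₁ n t ht
  · rw [funext (hψ n)]
    refine ((hφ _).comp_hasDerivAt_prodMk hηd hζd).congr_deriv ?_
    simp only [hψ, hu, hv, hlam]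
    linear_combination σ' t * hlax₂ n t ht
      - (2 * H (η n t) * (ζ t + G (η n t)) * φ (η (n+1) t, ζ t)
        - ((ζ t)^2 + (H (η n t))^2 - (H (η (n-1) t))^2 - (G (η n t))^2)
            * φ (η n t, ζ t)) * hsq
end

section
/- (Reduction of the Lax pair of the third flow.) Let c_0 ∈ ℝ, I ⊆ ℝ an open interval, σ : I → ℝ twice differentiable with σ'(t) > 0 and σ''(t) = -3 c_0 σ'(t)^2 on I, ν : ℤ → ℝ arbitrary, η(n,t) = ν(n) + σ(t), and H, G : ℝ → ℝ. Fix λ ∈ ℝ and set ζ(t) = λ / σ'(t)^{1/3}, u(n,t) = σ'(t)^{1/3} H(η(n,t)), v(n,t) = σ'(t)^{1/3} G(η(n,t)). Let φ : ℝ × ℝ → ℝ be differentiable in both arguments and suppose that for all n ∈ ℤ and t ∈ I, writing η = η(n,t), η̄ = η(n+1,t), η̲ = η(n-1,t), z = ζ(t): z φ(η,z) = H(η) φ(η̄,z) + H(η̲) φ(η̲,z) + G(η) φ(η,z), and c_0 z ∂_ζ φ(η,z) + ∂_η φ(η,z) = 2 H(η)(z^2 + z G(η) + H(η)^2 + H(η̲)^2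 + G(η)^2) φ(η̄,z) - (z^3 + 2 z H(η)^2 + H(η)^2 G(η̄) - H(η̲)^2 (2 G(η) + G(η̲)) - G(η)^3) φ(η,z). Then ψ(n,t) := φ(η(n,t), ζ(t)) satisfies the Lax pair of the third flow: λ ψ(n,t) = u(n,t) ψ(n+1,t) + u(n-1,t) ψ(n-1,t) + v(n,t) ψ(n,t), and ∂_t ψ(n,t) = 2 u(n,t)(λ^2 + λ v(n,t) + u(n,t)^2 + u(n-1,t)^2 + v(n,t)^2) ψ(n+1,t) - (λ^3 + 2 λ u(n,t)^2 + u(n,t)^2 v(n+1,t) - u(n-1,t)^2 (2 v(n,t) + v(n-1,t)) - v(n,t)^3) ψ(n,t), for all n ∈ ℤ, t ∈ I. -/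
/-!
Along the reduction, `ψ(n, t) = φ(η(n, t), ζ(t))` with `∂_t η = σ'`, and the equation
`σ'' = -3 c₀ σ'²` is exactly what gives `ζ' = c₀ ζ σ'`; so by the chain rule
`∂_t ψ = σ' (∂_η φ + c₀ ζ ∂_ζ φ)`. With `S = σ'^{1/3}` we have `λ = S ζ`, `u = S H`,
`v = S G` and `σ' = S³`, and both Lax equations are homogeneous (of weights 1 and 3 in
`λ, u, v`), so they are the reduced equations multiplied by `S` and by `S³`.
-/

open ContinuousLinearMap

theorem HasFDerivAt.hasDerivAt_comp_prodMk {𝕜 : Type*} [NontriviallyNormedField 𝕜]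
    {φ : 𝕜 × 𝕜 → 𝕜} {x y : 𝕜 → 𝕜} {a b x' y' t : 𝕜}
    (hφ : HasFDerivAt φ (a • fst 𝕜 𝕜 𝕜 + b • snd 𝕜 𝕜 𝕜) (x t, y t))
    (hx : HasDerivAt x x' t) (hy : HasDerivAt y y' t) :
    HasDerivAt (fun s => φ (x s, y s)) (a * x' + b * y') t := by
  have h := hφ.comp_hasDerivAt t (hx.prodMk hy)
  simp only [add_apply, smul_apply, coe_fst', coe_snd', smul_eq_mul] at h
  exact h

theorem Real.rpow_one_third_pow_three {x : ℝ} (hx : 0 ≤ x) : (x ^ ((1 : ℝ) / 3)) ^ 3 = x := by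
  simpa [one_div] using Real.rpow_inv_natCast_pow (n := 3) hx three_ne_zero

theorem hasDerivAt_div_rpow_one_third {f : ℝ → ℝ} {f' t : ℝ} (c : ℝ)
    (hf : HasDerivAt f f' t) (hpos : 0 < f t) :
    HasDerivAt (fun s => c / f s ^ ((1 : ℝ) / 3))
      (-(c / f t ^ ((1 : ℝ) / 3)) * f' / (3 * f t)) t := by
  have hroot : HasDerivAt (fun s => f s ^ ((1 : ℝ) / 3))
      (f' * (1 / 3) * f t ^ ((1 : ℝ) / 3 - 1)) t :=
    hf.rpow_const (Or.inl hpos.ne')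
  have hroot_pos : 0 < f t ^ ((1 : ℝ) / 3) := Real.rpow_pos_of_pos hpos _
  refine ((hasDerivAt_const t c).div hroot hroot_pos.ne').congr_deriv ?_
  rw [Real.rpow_sub hpos, Real.rpow_one]
  field_simp
  ring

theorem hasDerivAt_div_rpow_one_third_of_riccati {f : ℝ → ℝ} {f' t : ℝ} (c c₀ : ℝ)
    (hf : HasDerivAt f f' t) (hpos : 0 < f t) (hode : f' = -3 * c₀ * f t ^ 2) :
    HasDerivAt (fun s => c / f s ^ ((1 : ℝ) / 3))
      (c₀ * (c / f t ^ ((1 : ℝ) / 3)) * f t) t :=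
  (hasDerivAt_div_rpow_one_third c hf hpos).congr_deriv (by
    rw [hode]
    field_simp)

/-- Reduction of the Lax pair of the third flow: if `φ(η, ζ)` solves the
reduced third-flow Lax pair along the reduction `η(n,t) = ν(n) + σ(t)`,
`ζ(t) = λ/σ'(t)^(1/3)`, then `ψ(n,t) = φ(η(n,t), ζ(t))` solves the Lax pair of the
third flow of the Toda hierarchy with `u = σ'^(1/3) H(η)`, `v = σ'^(1/3) G(η)`. -/
theorem lax_reduction_third_flow
    (c₀ a b lam : ℝ) (σ σ' σ'' : ℝ → ℝ)
    (hσ : ∀ t ∈ Set.Ioo a b, HasDerivAt σ (σ' t) t)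
    (hσ' : ∀ t ∈ Set.Ioo a b, HasDerivAt σ' (σ'' t) t)
    (hσpos : ∀ t ∈ Set.Ioo a b, 0 < σ' t)
    (hode : ∀ t ∈ Set.Ioo a b, σ'' t = -3 * c₀ * (σ' t)^2)
    (ν : ℤ → ℝ) (η : ℤ → ℝ → ℝ) (hη : ∀ (n : ℤ) (t : ℝ), η n t = ν n + σ t)
    (H G : ℝ → ℝ)
    (ζ : ℝ → ℝ) (hζ : ∀ t : ℝ, ζ t = lam / (σ' t) ^ ((1 : ℝ)/3))
    (u v : ℤ → ℝ → ℝ)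
    (hu : ∀ (n : ℤ) (t : ℝ), u n t = (σ' t) ^ ((1 : ℝ)/3) * H (η n t))
    (hv : ∀ (n : ℤ) (t : ℝ), v n t = (σ' t) ^ ((1 : ℝ)/3) * G (η n t))
    (φ φη φζ : ℝ × ℝ → ℝ)
    (hφ : ∀ p : ℝ × ℝ, HasFDerivAt φ
      (φη p • ContinuousLinearMap.fst ℝ ℝ ℝ + φζ p • ContinuousLinearMap.snd ℝ ℝ ℝ) p)
    (hlax₁ : ∀ (n : ℤ), ∀ t ∈ Set.Ioo a b,
      ζ t * φ (η n t, ζ t) =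
        H (η n t) * φ (η (n+1) t, ζ t) + H (η (n-1) t) * φ (η (n-1) t, ζ t)
          + G (η n t) * φ (η n t, ζ t))
    (hlax₂ : ∀ (n : ℤ), ∀ t ∈ Set.Ioo a b,
      c₀ * ζ t * φζ (η n t, ζ t) + φη (η n t, ζ t) =
        2 * H (η n t) * ((ζ t)^2 + ζ t * G (η n t) + (H (η n t))^2
              + (H (η (n-1) t))^2 + (G (η n t))^2) * φ (η (n+1) t, ζ t)
          - ((ζ t)^3 + 2 * ζ t * (H (η n t))^2 + (H (η n t))^2 * G (η (n+1) t)
              - (H (η (n-1) t))^2 * (2 * G (η n t) + G (η (n-1) t))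
              - (G (η n t))^3) * φ (η n t, ζ t))
    (ψ : ℤ → ℝ → ℝ) (hψ : ∀ (n : ℤ) (t : ℝ), ψ n t = φ (η n t, ζ t)) :
    ∀ (n : ℤ), ∀ t ∈ Set.Ioo a b,
      lam * ψ n t = u n t * ψ (n+1) t + u (n-1) t * ψ (n-1) t + v n t * ψ n t ∧
      HasDerivAt (fun s => ψ n s)
        (2 * u n t * (lam^2 + lam * v n t + (u n t)^2 + (u (n-1) t)^2 + (v n t)^2)
            * ψ (n+1) t
          - (lam^3 + 2 * lam * (u n t)^2 + (u n t)^2 * v (n+1) t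
              - (u (n-1) t)^2 * (2 * v n t + v (n-1) t) - (v n t)^3) * ψ n t) t := by
  intro n t ht
  set S := σ' t ^ ((1 : ℝ) / 3) with hS
  have hS3 : S ^ 3 = σ' t := Real.rpow_one_third_pow_three (hσpos t ht).le
  have hlam : lam = ζ t * S := by
    rw [hζ, div_mul_cancel₀ _ (Real.rpow_pos_of_pos (hσpos t ht) _).ne']
  refine ⟨?_, ?_⟩
  · simp only [hψ, hu, hv, hlam, ← hS]
    linear_combination S * hlax₁ n t ht
  · have hη' : HasDerivAt (η n) (σ' t) t := by
      simpa only [funext (hη n)] using (hσ t ht).const_add (ν n)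
    have hζ' : HasDerivAt ζ (c₀ * ζ t * σ' t) t := by
      rw [funext hζ]
      exact hasDerivAt_div_rpow_one_third_of_riccati lam c₀ (hσ' t ht) (hσpos t ht) (hode t ht)
    simp only [hψ]
    refine ((hφ _).hasDerivAt_comp_prodMk hη' hζ').congr_deriv ?_
    simp only [hu, hv, hlam, ← hS]
    rw [← hS3]
    linear_combination S ^ 3 * hlax₂ n t ht
end
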